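/- Let δ be a semidegree on ℂ(x,y) with generic degree-wise Puiseux series φ(x) + ξx^r. Let ψ₁, ψ₂ be degree-wise Puiseux series and g_i := ∏_{ψ_{ij} conjugate of ψ_i} (y − ψ_{ij}(x)) ∈ ℂ((x⁻¹))*[y] for i = 1, 2. Set ε_{ij} := deg_x(φ(x) + ξx^r − ψ_{ij}(x)) and ε_i := min_j ε_{ij}. If ε₁ ≥ ε₂, then δ(g₁)/deg_y(g₁) ≥ δ(g₂)/deg_y(g₂). -/

import Mathlib

open Polynomial

noncomputable section

open scoped Classical

/-! ### Degree-wise Puiseux series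

A degree-wise Puiseux series `∑_{j ≤ k} a_j x^{j/p}` in `x` is encoded as a Hahn series in
`t = x⁻¹` over `ℚ`: the coefficient of `x^a` is the Hahn-series coefficient at the
exponent `-a`. -/

/-- The field of "generalized" degree-wise Puiseux series in `x` (Hahn series in `x⁻¹`). -/
abbrev DPS : Type := HahnSeries ℚ ℂ

/-- The series `x`. -/
def xSer : DPS := HahnSeries.single (-1 : ℚ) (1 : ℂ)

/-- The series `x ^ r` for a rational number `r`. -/
def xPow (r : ℚ) : DPS := HahnSeries.single (-r) (1 : ℂ)

/-- `f` lies in `ℂ((x^{-1/p}))`. -/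
def BddDenom (p : ℕ) (f : DPS) : Prop := ∀ q ∈ f.support, ∃ j : ℤ, q = (j : ℚ) / (p : ℚ)

/-- `f` is an honest degree-wise Puiseux series (bounded denominators). -/
def IsDPS (f : DPS) : Prop := ∃ p : ℕ, 0 < p ∧ BddDenom p f

/-- The polydromy order of a degree-wise Puiseux series: the smallest `p ≥ 1` with
`f ∈ ℂ((x^{-1/p}))`. -/
def polydromy (f : DPS) : ℕ := sInf {p : ℕ | 0 < p ∧ BddDenom p f}

/-- The `x`-degree of a degree-wise Puiseux series. -/
def degx (f : DPS) : ℚ := -f.order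

/-- Twist of `f` by `z`: the term `a x^{j/p}` becomes `a z^j x^{j/p}`.  For `z` a `p`-th
root of unity (with `p` the polydromy order of `f`) this is a conjugate of `f`. -/
def conjSer (p : ℕ) (z : ℂ) (f : DPS) : DPS :=
  ⟨fun q => z ^ (⌊-(q * (p : ℚ))⌋) * f.coeff q,
    f.isPWO_support.mono (fun q hq => by
      simp only [Function.mem_support, ne_eq] at hq ⊢
      exact fun h => hq (by rw [h, mul_zero]))⟩

/-- `ψ'` is a conjugate of the degree-wise Puiseux series `ψ`. -/
def IsConjugate (ψ ψ' : DPS) : Prop :=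
  ∃ z : ℂ, z ^ polydromy ψ = 1 ∧ ψ' = conjSer (polydromy ψ) z ψ

/-- The product `∏_j (y - ψ_j(x))` over all the conjugates `ψ_j` of `ψ`, where `ζ` is a
primitive root of unity of order the polydromy order of `ψ`. -/
def allConjProd (ζ : ℂ) (ψ : DPS) : Polynomial DPS :=
  ∏ j ∈ Finset.range (polydromy ψ), (X - C (conjSer (polydromy ψ) (ζ ^ (j + 1)) ψ))

/-! ### Polynomials in `x, y` -/

/-- `ℂ[x,y]`, with `y` the outer variable. -/
abbrev PolyXY : Type := Polynomial (Polynomial ℂ)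

/-- The polynomial `x`. -/
def xPoly : PolyXY := C Polynomial.X

/-- The polynomial `y`. -/
def yPoly : PolyXY := X

/-- The inclusion `ℂ[x] → ℂ⟪x⁻¹⟫`. -/
def toDPSc : Polynomial ℂ →+* DPS := Polynomial.eval₂RingHom HahnSeries.C xSer

/-- The inclusion `ℂ[x,y] → ℂ⟪x⁻¹⟫[y]`. -/
def toDPS : PolyXY →+* Polynomial DPS := Polynomial.mapRingHom toDPSc

/-- An element of `ℂ⟪x⁻¹⟫[y]` is (the image of) a polynomial in `(x,y)`. -/
def IsPolynomialForm (g : Polynomial DPS) : Prop := ∃ F : PolyXY, g = toDPS F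

/-- Evaluation of `f ∈ ℂ[x,y]` at a point of `ℂ²`. -/
def evalXY (f : PolyXY) (p : ℂ × ℂ) : ℂ := (f.map (Polynomial.evalRingHom p.1)).eval p.2

/-- The total degree of `f ∈ ℂ[x,y]` in `(x,y)`. -/
def totalDegN (f : PolyXY) : ℕ := f.support.sup fun b => (f.coeff b).natDegree + b

/-! ### Truncations and Puiseux pairs -/

/-- `[f]_{>r}`: the sum of the terms of `f` of `x`-degree strictly greater than `r`. -/
def truncGT (r : ℚ) (f : DPS) : DPS :=
  ⟨fun q => if q < -r then f.coeff q else 0,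
    f.isPWO_support.mono (fun q hq => by
      simp only [Function.mem_support, ne_eq] at hq ⊢
      exact fun h => hq (by simp [h]))⟩

/-- `[f]_{≥r}`: the sum of the terms of `f` of `x`-degree at least `r`. -/
def truncGE (r : ℚ) (f : DPS) : DPS :=
  ⟨fun q => if q ≤ -r then f.coeff q else 0,
    f.isPWO_support.mono (fun q hq => by
      simp only [Function.mem_support, ne_eq] at hq ⊢
      exact fun h => hq (by simp [h]))⟩

/-- The product of the second components of a list of pairs. -/
def prodP (l : List (ℤ × ℕ)) : ℕ := (l.map Prod.snd).prod

/-- `charExp l j` is the `(j+1)`-st characteristic exponent `q_{j+1}/(p_1 ⋯ p_{j+1})`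
determined by the list of (formal) Puiseux pairs `l`. -/
def charExp (l : List (ℤ × ℕ)) (j : ℕ) : ℚ :=
  (((l.getD j (0, 1)).1 : ℚ)) / (prodP (l.take (j + 1)) : ℚ)

/-- `l = [(q_1,p_1),…,(q_k,p_k)]` is the list of Puiseux pairs of `φ`. -/
def HasPuiseuxPairs (φ : DPS) (l : List (ℤ × ℕ)) : Prop :=
  (∀ pr ∈ l, 2 ≤ pr.2 ∧ Int.gcd pr.1 (pr.2 : ℤ) = 1) ∧
  polydromy φ = prodP l ∧
  ∀ j < l.length,
    BddDenom (prodP (l.take j)) (truncGT (charExp l j) φ) ∧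
    ¬ BddDenom (prodP (l.take j)) (truncGE (charExp l j) φ)

/-- The last element of a list of pairs (junk value `(0,1)` for the empty list). -/
def lastPair (l : List (ℤ × ℕ)) : ℤ × ℕ := l.getLast?.getD (0, 1)

/-! ### Semidegrees via generic degree-wise Puiseux series -/

/-- The data `(p̃, φ, r)` of a semidegree `δ` on `ℂ(x,y)` with `δ(x) = p̃ > 0`:
its generic degree-wise Puiseux series is `φ(x) + ξ x^r`. -/
structure SemidegreeData where
  /-- `p̃ = δ(x)`. -/
  ptilde : ℕ
  hpos : 0 < ptilde
  /-- `φ(x) ∈ ℂ[x^{1/p̃}, x^{-1/p̃}]`. -/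
  phi : DPS
  /-- the exponent of the generic term. -/
  r : ℚ
  hden : BddDenom ptilde phi
  hfin : phi.support.Finite
  hrden : ∃ j : ℤ, r = (j : ℚ) / (ptilde : ℚ)
  hr : ∀ q ∈ phi.support, q < -r

/-- Substitution `y := φ(x) + ξ x^r` into an element of `ℂ⟪x⁻¹⟫[y]`; the result is a
polynomial in the indeterminate `ξ` with degree-wise Puiseux series coefficients. -/
def SemidegreeData.subst (D : SemidegreeData) (g : Polynomial DPS) : Polynomial DPS :=
  Polynomial.eval₂ Polynomial.C (Polynomial.C D.phi + Polynomial.C (xPow D.r) * Polynomial.X) g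

/-- The `x`-degree of a polynomial in `ξ` with degree-wise Puiseux series coefficients. -/
def pdegx (h : Polynomial DPS) : ℚ :=
  if hh : h.support.Nonempty then h.support.sup' hh fun j => degx (h.coeff j) else 0

/-- The value `δ(g) = δ(x) · deg_x (g|_{y = φ(x) + ξ x^r})` of the semidegree on an
element of `ℂ⟪x⁻¹⟫[y]`. -/
def SemidegreeData.val (D : SemidegreeData) (g : Polynomial DPS) : ℚ :=
  (D.ptilde : ℚ) * pdegx (D.subst g)

/-- The value of the semidegree on a polynomial in `(x,y)`. -/
def SemidegreeData.valP (D : SemidegreeData) (f : PolyXY) : ℚ := D.val (toDPS f)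

/-- The (integer) value of the semidegree on a polynomial in `(x,y)`. -/
def SemidegreeData.deg (D : SemidegreeData) (f : PolyXY) : ℤ := ⌊D.valP f⌋

/-- `lc_i(f)`: the coefficient of `x^{δ̃(f)}` in `f|_{y = φ(x) + ξ x^r}`, a polynomial
in `ξ`. -/
def SemidegreeData.lcXi (D : SemidegreeData) (f : PolyXY) : Polynomial ℂ :=
  ∑ j ∈ (D.subst (toDPS f)).support,
    Polynomial.monomial j (((D.subst (toDPS f)).coeff j).coeff (-(pdegx (D.subst (toDPS f)))))

/-! ### Key forms -/

/-- The key forms `f_0 = x, f_1 = y, f_2, …, f_n` of a semidegree: each subsequent key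
form lies in `ℂ[f_0, f_0⁻¹, f_1, …, f_k]` and has `δ`-value smaller than the expected
value. -/
structure KeyForms (D : SemidegreeData) where
  /-- index of the last key form. -/
  n : ℕ
  hn : 1 ≤ n
  /-- the key forms (elements of `ℂ[x,x⁻¹,y] ⊆ ℂ⟪x⁻¹⟫[y]`). -/
  f : ℕ → Polynomial DPS
  h0 : f 0 = Polynomial.C xSer
  h1 : f 1 = Polynomial.X
  hrec : ∀ k, 1 ≤ k → k < n → ∃ (m : ℕ) (g : Polynomial DPS), 1 ≤ m ∧
    g ∈ Subring.closure (insert (Polynomial.C (xPow (-1))) (f '' Set.Iic k)) ∧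
    f (k + 1) = f k ^ m - g ∧
    D.val (f (k + 1)) < (m : ℚ) * D.val (f k)

/-- All the key forms of the semidegree `D` are polynomials. -/
def AllKeyFormsPolynomial (D : SemidegreeData) : Prop :=
  ∀ K : KeyForms D, ∀ k ≤ K.n, IsPolynomialForm (K.f k)

/-- `D` is a formal-Puiseux-pairs presentation `((q_1,p_1),…,(q_{l+1},p_{l+1}))` of the
generic degree-wise Puiseux series `φ + ξ x^r` of a semidegree. -/
def HasFormalPuiseuxPairs (D : SemidegreeData) (l : List (ℤ × ℕ)) : Prop :=
  l ≠ [] ∧ HasPuiseuxPairs D.phi l.dropLast ∧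
  1 ≤ (lastPair l).2 ∧ Int.gcd (lastPair l).1 ((lastPair l).2 : ℤ) = 1 ∧
  D.ptilde = prodP l ∧ D.r = ((lastPair l).1 : ℚ) / (prodP l : ℚ)

/-- `F ∈ ℂ[x,y]` defines a curve with one place at infinity: all of the roots of its
degree-wise Puiseux factorization are the conjugates of a single series. -/
def OnePlaceAtInfinity (F : PolyXY) : Prop :=
  0 < F.natDegree ∧
  ∃ (ψ : DPS) (c ζ : ℂ), c ≠ 0 ∧ IsDPS ψ ∧ IsPrimitiveRoot ζ (polydromy ψ) ∧
    polydromy ψ = F.natDegree ∧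
    toDPS F = Polynomial.C (HahnSeries.C c) * allConjProd ζ ψ

/-! ### The model for sections of line bundles on surfaces in `S_pol`

On a surface `X ∈ S_pol` with curves at infinity `Γ_1, …, Γ_N` carrying semidegrees
`δ_1, …, δ_N`, the global sections of `𝒪(∑ d_j Γ_j)` are identified with the
polynomials `f ∈ ℂ[x,y]` with `δ_k(f) ≤ d_k` for all `k`, and an effective divisor
supported away from infinity is the divisor of a nonzero polynomial `h`, whose class is
`∑ δ_k(h) Γ_k`. -/

/-- The space of global sections of `𝒪(∑ d_j Γ_j)` in the polynomial model. -/
def secSetQ (N : ℕ) (D : Fin N → SemidegreeData) (d : Fin N → ℤ) : Set PolyXY :=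
  {f | f = 0 ∨ ∀ k, (D k).valP f ≤ (d k : ℚ)}

/-- Membership in the global Enriques semigroup `P^{st}(X)` in the polynomial model:
`∑ d_j Γ_j` is linearly equivalent to an effective divisor supported away from the
curves at infinity. -/
def MemEnriques (N : ℕ) (D : Fin N → SemidegreeData) (d : Fin N → ℤ) : Prop :=
  ∃ h : PolyXY, h ≠ 0 ∧ ∀ k, (D k).valP h = (d k : ℚ)

/-- The vector `δ⃗(f) = (δ_1(f), …, δ_N(f))`. -/
def degVec (N : ℕ) (D : Fin N → SemidegreeData) (f : PolyXY) : Fin N → ℤ :=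
  fun k => (D k).deg f

/-! ### The polynomials `f_ij` and the associated monomials -/

/-- The data of the polynomials `f_{ij}` of the Cox-ring theorem for a surface in
`S_pol` with semidegrees `D i` at infinity: `f_{ij}` is (a polynomial playing the role
of) the last key form of the truncated semidegree `δ_{ij}`; it defines a curve with one
place at infinity and has a degree-wise Puiseux root whose Puiseux pairs are the first
`j` formal Puiseux pairs of `δ_i` and which agrees with `φ_i` above the `(j+1)`-st
characteristic exponent. -/
structure CoxData (N : ℕ) (D : Fin N → SemidegreeData) where
  /-- `l i + 1` = number of formal Puiseux pairs of `δ_i`. -/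
  l : Fin N → ℕ
  /-- the formal Puiseux pairs of `δ_i`. -/
  pairs : Fin N → List (ℤ × ℕ)
  hpairs : ∀ i, HasFormalPuiseuxPairs (D i) (pairs i)
  hlen : ∀ i, (pairs i).length = l i + 1
  /-- the polynomials `f_{ij}`. -/
  F : (i : Fin N) → Fin (l i + 1) → PolyXY
  hone : ∀ i j, OnePlaceAtInfinity (F i j)
  hroot : ∀ i (j : Fin (l i + 1)), ∃ ψ : DPS,
    Polynomial.eval ψ (toDPS (F i j)) = 0 ∧
    HasPuiseuxPairs ψ ((pairs i).take (j : ℕ)) ∧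
    truncGT (charExp (pairs i) (j : ℕ)) ψ = truncGT (charExp (pairs i) (j : ℕ)) (D i).phi

/-- The index set of the family `f_{ij}`. -/
abbrev CoxIdx {N : ℕ} (l : Fin N → ℕ) : Type := (i : Fin N) × Fin (l i + 1)

/-- The monomial `g_{αβγ⃗} = x^α y^β ∏ f_{ij}^{γ_{ij}}`. -/
def gMon {N : ℕ} {D : Fin N → SemidegreeData} (CD : CoxData N D)
    (α β : ℕ) (γ : CoxIdx CD.l → ℕ) : PolyXY :=
  xPoly ^ α * yPoly ^ β * ∏ ij : CoxIdx CD.l, CD.F ij.1 ij.2 ^ γ ij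

/-- The set `𝓔_{d⃗}` of exponents `(α, β, γ⃗)` with
`α δ_k(x) + β δ_k(y) + ∑ γ_{ij} δ_k(f_{ij}) ≤ d_k` for all `k`. -/
def ECal {N : ℕ} {D : Fin N → SemidegreeData} (CD : CoxData N D) (d : Fin N → ℤ) :
    Set (ℕ × ℕ × (CoxIdx CD.l → ℕ)) :=
  {t | ∀ k, (t.1 : ℚ) * (D k).valP xPoly + (t.2.1 : ℚ) * (D k).valP yPoly +
      ∑ ij : CoxIdx CD.l, (t.2.2 ij : ℚ) * (D k).valP (CD.F ij.1 ij.2) ≤ (d k : ℚ)}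

/-! ### Approximate roots (for curves with one place at infinity) -/

/-- `g 0 = x, g 1, …, g (s+1) = F` behave like the system of approximate roots (in the
sense of Abhyankar–Moh) of a polynomial `F` defining a curve with one place at infinity:
each `g j` defines a curve with one place at infinity, whose degree-wise Puiseux root
has as Puiseux pairs the first `j - 1` Puiseux pairs of the root `ψ` of `F` and agrees
with `ψ` above the `j`-th characteristic exponent. -/
def IsApproxRootFamily (s : ℕ) (g : Fin (s + 2) → PolyXY) : Prop :=
  g 0 = xPoly ∧ OnePlaceAtInfinity (g (Fin.last (s + 1))) ∧
  (∀ j : Fin (s + 2), 1 ≤ (j : ℕ) → (g j).Monic) ∧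
  ∃ (ψ : DPS) (pr : List (ℤ × ℕ)),
    pr.length = s ∧
    Polynomial.eval ψ (toDPS (g (Fin.last (s + 1)))) = 0 ∧
    HasPuiseuxPairs ψ pr ∧
    ∀ j : Fin (s + 2), 1 ≤ (j : ℕ) → (j : ℕ) ≤ s →
      OnePlaceAtInfinity (g j) ∧
      ∃ ψj : DPS, Polynomial.eval ψj (toDPS (g j)) = 0 ∧
        HasPuiseuxPairs ψj (pr.take ((j : ℕ) - 1)) ∧
        truncGT (charExp pr ((j : ℕ) - 1)) ψj = truncGT (charExp pr ((j : ℕ) - 1)) ψ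

/-! ### The Cox ring model -/

/-- The ambient ring in which the Cox ring `𝓡(X) = ⊕_{d⃗ ∈ ℤ^N} Γ(X, 𝒪(∑ d_j Γ_j))`
is realized: an element `(f)_{d⃗}` of the `d⃗`-th graded piece is `single d⃗ f`. -/
abbrev CoxRing (N : ℕ) : Type := AddMonoidAlgebra PolyXY (Fin N → ℤ)

/-- The set of homogeneous elements of the Cox ring: a section `f ∈ Γ(X, 𝒪(∑ d_j Γ_j))`
placed in degree `d⃗`.  The Cox ring itself is the `ℂ`-span of this set. -/
def coxHomSet (N : ℕ) (D : Fin N → SemidegreeData) : Set (CoxRing N) :=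
  {z | ∃ (d : Fin N → ℤ) (f : PolyXY), f ∈ secSetQ N D d ∧ z = AddMonoidAlgebra.single d f}

/-! ### Statement 19: the comparison lemma for semidegrees -/

/-- `deg_x (φ(x) + ξ x^r − ψ'(x))` for an indeterminate `ξ`: the `x`-degree of the
polynomial `(φ − ψ') + x^r · ξ` in `ξ` with degree-wise Puiseux series coefficients. -/
def epsilonOf (D : SemidegreeData) (ψ' : DPS) : ℚ :=
  pdegx (Polynomial.C (D.phi - ψ') + Polynomial.C (xPow D.r) * Polynomial.X)

/-!
Substituting `y = φ + ξ xʳ` turns `g = ∏ⱼ (y - ψⱼ)` into `∏ⱼ ((φ - ψⱼ) + xʳ ξ)`. The `x`-degree on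
`ℂ⟪x⁻¹⟫[ξ]` is minus the order in `ℂ[ξ]⟪x⁻¹⟫`, hence additive since `ℂ[ξ]` is a domain, so
`δ(g) = δ(x) ∑ⱼ εⱼ`, while `deg_y g = p` is the polydromy order.

Let `χ` be a conjugate with `ε_χ = ε = minⱼ εⱼ`, so `χ` agrees with `φ` in `x`-degrees `> ε`.
With `σ : x^{1/p} ↦ ζ x^{1/p}`, the `x`-degree of `φ + ξ xʳ - σⁿχ` is then the largest `x`-degree
`a > ε` of a term of `φ` with `n a ∉ ℤ`, or `ε` if there is none. This `c_ε(n)` depends only on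
`φ` and `ε`, is monotone in `ε` and `p`-periodic in `n`, so `δ(g) / deg_y g` is `δ(x)` times the
mean of `c_ε` over a period. If `ε₂ ≤ ε₁`, then `c_{ε₁}` is both `p₁`- and `p₂`-periodic, so its
two means agree, and `c_{ε₂} ≤ c_{ε₁}`.
-/

namespace HahnSeries

variable {Γ R S : Type*} [AddCommMonoid Γ] [PartialOrder Γ] [IsOrderedCancelAddMonoid Γ]
  [Semiring R] [Semiring S]

def mapRingHom (f : R →+* S) : HahnSeries Γ R →+* HahnSeries Γ S where
  toFun x := x.map f
  map_one' := HahnSeries.map_one f.toMonoidWithZeroHom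
  map_mul' _ _ := HahnSeries.map_mul f.toNonUnitalRingHom
  map_zero' := HahnSeries.map_zero f.toZeroHom
  map_add' _ _ := HahnSeries.map_add f.toAddMonoidHom

theorem coeff_mapRingHom (f : R →+* S) (x : HahnSeries Γ R) (q : Γ) :
    (mapRingHom f x).coeff q = f (x.coeff q) :=
  rfl

end HahnSeries

def polyToHahn : Polynomial DPS →+* HahnSeries ℚ (Polynomial ℂ) :=
  eval₂RingHom (HahnSeries.mapRingHom Polynomial.C) (HahnSeries.C Polynomial.X)

theorem coeff_coeff_polyToHahn (h : Polynomial DPS) (q : ℚ) (k : ℕ) :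
    ((polyToHahn h).coeff q).coeff k = (h.coeff k).coeff q := by
  induction h using Polynomial.induction_on' with
  | add f g hf hg => simp only [map_add, HahnSeries.coeff_add, Polynomial.coeff_add, hf, hg]
  | monomial n a =>
    rw [polyToHahn, coe_eval₂RingHom, eval₂_monomial, ← map_pow, mul_comm,
      HahnSeries.C_mul_eq_smul, HahnSeries.coeff_smul, HahnSeries.coeff_mapRingHom, smul_eq_mul,
      mul_comm, coeff_C_mul_X_pow, coeff_monomial]
    split_ifs <;> simp_all [eq_comm]

theorem polyToHahn_ne_zero {h : Polynomial DPS} (hh : h ≠ 0) : polyToHahn h ≠ 0 := by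
  intro h0
  apply hh
  ext k q
  rw [← coeff_coeff_polyToHahn, h0]
  rfl

theorem pdegx_le_iff {h : Polynomial DPS} (hh : h ≠ 0) {c : ℚ} :
    pdegx h ≤ c ↔ ∀ k, ∀ q < -c, (h.coeff k).coeff q = 0 := by
  rw [pdegx, dif_pos (nonempty_support_iff.mpr hh), Finset.sup'_le_iff]
  refine forall_congr' fun k => ?_
  by_cases hk : h.coeff k = 0
  · simp [hk]
  · simp [hk, degx, neg_le, HahnSeries.le_order_iff_forall hk]

theorem pdegx_eq_neg_order {h : Polynomial DPS} (hh : h ≠ 0) :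
    pdegx h = -(polyToHahn h).order := by
  refine eq_of_forall_ge_iff fun c => ?_
  rw [pdegx_le_iff hh, neg_le, HahnSeries.le_order_iff_forall (polyToHahn_ne_zero hh)]
  simp only [Polynomial.ext_iff, coeff_coeff_polyToHahn, Polynomial.coeff_zero]
  exact ⟨fun H q hq k => H k q hq, fun H k q hq => H q hq k⟩

theorem pdegx_mul {h₁ h₂ : Polynomial DPS} (h₁0 : h₁ ≠ 0) (h₂0 : h₂ ≠ 0) :
    pdegx (h₁ * h₂) = pdegx h₁ + pdegx h₂ := by
  rw [pdegx_eq_neg_order h₁0, pdegx_eq_neg_order h₂0, pdegx_eq_neg_order (mul_ne_zero h₁0 h₂0),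
    map_mul, HahnSeries.order_mul (polyToHahn_ne_zero h₁0) (polyToHahn_ne_zero h₂0), neg_add]

theorem pdegx_prod {ι : Type*} (s : Finset ι) {f : ι → Polynomial DPS} (hf : ∀ i ∈ s, f i ≠ 0) :
    pdegx (∏ i ∈ s, f i) = ∑ i ∈ s, pdegx (f i) := by
  induction s using Finset.cons_induction with
  | empty => simp [pdegx_eq_neg_order one_ne_zero]
  | cons a s ha ih =>
    rw [Finset.forall_mem_cons] at hf
    have hs : (∏ i ∈ s, f i) ≠ 0 := (Finset.prod_ne_zero_iff (M₀ := Polynomial DPS)).mpr hf.2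
    rw [Finset.prod_cons, Finset.sum_cons, pdegx_mul hf.1 hs, ih hf.2]

theorem C_add_C_mul_X_ne_zero {R : Type*} [Semiring R] (a : R) {u : R} (hu : u ≠ 0) :
    C a + C u * X ≠ 0 := fun h => hu (by simpa using congrArg (coeff · 1) h)

theorem xPow_ne_zero (r : ℚ) : xPow r ≠ 0 := HahnSeries.single_ne_zero one_ne_zero

theorem epsilonOf_le_iff (D : SemidegreeData) (θ : DPS) {c : ℚ} :
    epsilonOf D θ ≤ c ↔ D.r ≤ c ∧ ∀ q < -c, (D.phi - θ).coeff q = 0 := by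
  rw [epsilonOf, pdegx_le_iff (C_add_C_mul_X_ne_zero _ (xPow_ne_zero D.r))]
  constructor
  · intro h
    refine ⟨not_lt.mp fun hc => ?_, fun q hq => by simpa using h 0 q hq⟩
    simpa [xPow] using h 1 (-D.r) (neg_lt_neg hc)
  · rintro ⟨hr, h⟩ (_ | _ | k) q hq
    · simpa using h q hq
    · have : q ≠ -D.r := by intro e; linarith
      simp [xPow, this]
    · simp

theorem SemidegreeData.subst_allConjProd (D : SemidegreeData) (ζ : ℂ) (ψ : DPS) :
    D.subst (allConjProd ζ ψ) = ∏ j ∈ Finset.range (polydromy ψ),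
      (C (D.phi - conjSer (polydromy ψ) (ζ ^ (j + 1)) ψ) + C (xPow D.r) * X) := by
  change eval₂RingHom C (C D.phi + C (xPow D.r) * X) (allConjProd ζ ψ) = _
  rw [allConjProd, map_prod]
  refine Finset.prod_congr rfl fun j _ => ?_
  have hsub := map_sub (eval₂RingHom C (C D.phi + C (xPow D.r) * X)) X
    (C (conjSer (polydromy ψ) (ζ ^ (j + 1)) ψ))
  simp only [hsub, coe_eval₂RingHom, eval₂_X, eval₂_C, map_sub]
  ring

theorem SemidegreeData.val_allConjProd (D : SemidegreeData) (ζ : ℂ) (ψ : DPS) :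
    D.val (allConjProd ζ ψ) = D.ptilde * ∑ j ∈ Finset.range (polydromy ψ),
      epsilonOf D (conjSer (polydromy ψ) (ζ ^ (j + 1)) ψ) := by
  rw [SemidegreeData.val, D.subst_allConjProd,
    pdegx_prod _ fun j _ => C_add_C_mul_X_ne_zero _ (xPow_ne_zero D.r)]
  rfl

theorem natDegree_allConjProd (ζ : ℂ) (ψ : DPS) : (allConjProd ζ ψ).natDegree = polydromy ψ := by
  rw [allConjProd, natDegree_prod _ _ fun j _ => X_sub_C_ne_zero _]
  simp

theorem conjSer_coeff (p : ℕ) (z : ℂ) (f : DPS) (q : ℚ) :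
    (conjSer p z f).coeff q = z ^ ⌊-(q * p)⌋ * f.coeff q := rfl

theorem conjSer_conjSer (p : ℕ) (z w : ℂ) (f : DPS) :
    conjSer p z (conjSer p w f) = conjSer p (z * w) f := by
  ext q
  simp only [conjSer_coeff, mul_zpow, mul_assoc]

theorem BddDenom.conjSer {p : ℕ} {f : DPS} (hf : BddDenom p f) (z : ℂ) :
    BddDenom p (conjSer p z f) := fun q hq =>
  hf q (HahnSeries.mem_support _ _ |>.mpr (right_ne_zero_of_mul hq))

theorem IsDPS.bddDenom_polydromy {ψ : DPS} (hψ : IsDPS ψ) : BddDenom (polydromy ψ) ψ :=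
  (Nat.sInf_mem hψ).2

theorem coeff_sub_conjSer_pow_ne_zero_iff {p : ℕ} (hp : 0 < p) {ψ : DPS} (hψ : BddDenom p ψ)
    {ζ : ℂ} (hζ : IsPrimitiveRoot ζ p) (n : ℕ) (q : ℚ) :
    (ψ - conjSer p (ζ ^ n) ψ).coeff q ≠ 0 ↔ ψ.coeff q ≠ 0 ∧ ((n : ℚ) * q).den ≠ 1 := by
  rw [HahnSeries.coeff_sub, conjSer_coeff]
  by_cases h0 : ψ.coeff q = 0
  · simp [h0]
  obtain ⟨k, rfl⟩ := hψ q h0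
  have hp' : (p : ℚ) ≠ 0 := by positivity
  have hfloor : ⌊-((k : ℚ) / p * p)⌋ = -k := by
    rw [div_mul_cancel₀ _ hp', ← Int.cast_neg, Int.floor_intCast]
  have hden : ((n : ℚ) * (k / p)).den = 1 ↔ (p : ℤ) ∣ n * -k := by
    rw [mul_neg, Int.dvd_neg, ← Rat.den_div_intCast_eq_one_iff _ _ (by exact_mod_cast hp.ne')]
    push_cast
    ring_nf
  rw [hfloor, ← zpow_natCast, ← zpow_mul, ← one_sub_mul, mul_ne_zero_iff, sub_ne_zero, ne_comm,
    Ne, hζ.zpow_eq_one_iff_dvd, ← hden]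
  tauto

namespace Function.Periodic

variable {M : Type*} [AddCommMonoid M] {f : ℕ → M} {p : ℕ}

theorem sum_range_add (hf : Periodic f p) (c : ℕ) :
    ∑ n ∈ Finset.range p, f (n + c) = ∑ n ∈ Finset.range p, f n := by
  nth_rw 1 [Finset.range_eq_Ico]
  rw [Finset.sum_Ico_add', zero_add, add_comm p c]
  calc ∑ n ∈ Finset.Ico c (c + p), f n = ∑ n ∈ Finset.Ico c (c + p), f (n % p) :=
        Finset.sum_congr rfl fun n _ => (hf.map_mod_nat n).symm
    _ = (((Multiset.Ico c (c + p)).map (· % p)).map f).sum := by rw [Multiset.map_map]; rfl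
    _ = ∑ n ∈ Finset.range p, f n := by rw [Nat.multiset_Ico_map_mod]; rfl

theorem sum_range_mul (hf : Periodic f p) (k : ℕ) :
    ∑ n ∈ Finset.range (k * p), f n = k • ∑ n ∈ Finset.range p, f n := by
  induction k with
  | zero => simp
  | succ k ih =>
    rw [add_one_mul, Finset.sum_range_add, ih, succ_nsmul]
    congr 1
    exact Finset.sum_congr rfl fun n _ => by rw [add_comm]; exact hf.nat_mul k n

theorem nsmul_sum_range_comm {q : ℕ} (hp : Periodic f p) (hq : Periodic f q) :
    q • ∑ n ∈ Finset.range p, f n = p • ∑ n ∈ Finset.range q, f n := by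
  rw [← hp.sum_range_mul, ← hq.sum_range_mul, mul_comm]

theorem inf'_range_succ_le {α : Type*} [LinearOrder α] {g : ℕ → α} (hg : Periodic g p)
    (hp : (Finset.range p).Nonempty) (m : ℕ) :
    (Finset.range p).inf' hp (fun j => g (j + 1)) ≤ g m := by
  have hp0 : 0 < p := Nat.pos_of_ne_zero (Finset.nonempty_range_iff.mp hp)
  have hshift : Periodic (fun j => g (j + 1)) p := fun j => by
    simp only [add_right_comm j p 1, hg (j + 1)]
  calc (Finset.range p).inf' hp (fun j => g (j + 1)) ≤ g ((m + (p - 1)) % p + 1) :=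
        Finset.inf'_le _ (Finset.mem_range.mpr (Nat.mod_lt _ hp0))
    _ = g m := by
      rw [hshift.map_mod_nat, add_assoc, Nat.sub_add_cancel hp0, hg m]

end Function.Periodic

namespace SemidegreeData

variable (D : SemidegreeData)

/-- The value of `deg_x(φ + ξ xʳ − σⁿχ)` when `χ` agrees with `φ` in `x`-degrees `> t`
(`epsilonOf_eq_contactDegx`): `σⁿ` moves the term `x^{-q}` of `χ` exactly when `n q ∉ ℤ`. -/
def contactDegx (t : ℚ) (n : ℕ) : ℚ :=
  (D.hfin.toFinset.filter fun q => q < -t ∧ ((n : ℚ) * q).den ≠ 1).fold max t (- ·)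

variable {D}

theorem contactDegx_le_iff {t c : ℚ} {n : ℕ} :
    D.contactDegx t n ≤ c ↔
      t ≤ c ∧ ∀ q, D.phi.coeff q ≠ 0 → q < -t → ((n : ℚ) * q).den ≠ 1 → -q ≤ c := by
  simp [contactDegx, Finset.fold_max_le, and_imp]

theorem le_contactDegx (t : ℚ) (n : ℕ) : t ≤ D.contactDegx t n :=
  (contactDegx_le_iff.mp le_rfl).1

theorem neg_le_contactDegx {t q : ℚ} {n : ℕ} (hq : D.phi.coeff q ≠ 0) (hqt : q < -t)
    (hn : ((n : ℚ) * q).den ≠ 1) : -q ≤ D.contactDegx t n :=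
  (contactDegx_le_iff.mp le_rfl).2 q hq hqt hn

theorem contactDegx_mono (n : ℕ) : Monotone (D.contactDegx · n) := by
  intro s t hst
  refine contactDegx_le_iff.mpr ⟨hst.trans (le_contactDegx t n), fun q hq hqs hn => ?_⟩
  by_cases hqt : q < -t
  · exact neg_le_contactDegx hq hqt hn
  · exact (neg_le.mp (not_lt.mp hqt)).trans (le_contactDegx t n)

theorem contactDegx_periodic {t : ℚ} {c : ℕ}
    (hc : ∀ q, D.phi.coeff q ≠ 0 → q < -t → ((c : ℚ) * q).den = 1) :
    Function.Periodic (D.contactDegx t) c := fun n => by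
  refine congrArg (Finset.fold max t (- ·)) (Finset.filter_congr fun q hq => ?_)
  rw [Set.Finite.mem_toFinset, HahnSeries.mem_support] at hq
  refine and_congr_right fun hqt => ?_
  rw [Nat.cast_add, add_mul, ← (Rat.den_eq_one_iff _).mp (hc q hq hqt), Rat.add_intCast_den]

theorem epsilonOf_eq_contactDegx {χ θ : DPS} {t : ℚ} {n : ℕ} (hr : D.r ≤ t)
    (ht : t ≤ epsilonOf D θ) (hχ : ∀ q < -t, (D.phi - χ).coeff q = 0)
    (hθ : ∀ q, (χ - θ).coeff q ≠ 0 ↔ χ.coeff q ≠ 0 ∧ ((n : ℚ) * q).den ≠ 1) :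
    epsilonOf D θ = D.contactDegx t n := by
  have hagree : ∀ q < -t, (D.phi - θ).coeff q = (χ - θ).coeff q ∧ D.phi.coeff q = χ.coeff q :=
    fun q hq => ⟨by rw [← sub_add_sub_cancel D.phi χ θ, HahnSeries.coeff_add, hχ q hq, zero_add],
      sub_eq_zero.mp (hχ q hq)⟩
  refine le_antisymm ((epsilonOf_le_iff D θ).mpr ⟨hr.trans (le_contactDegx t n), fun q hq => ?_⟩)
    (contactDegx_le_iff.mpr ⟨ht, fun q hq hqt hn => ?_⟩)
  · have hqt : q < -t := hq.trans_le (neg_le_neg (le_contactDegx t n))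
    rw [(hagree q hqt).1]
    by_contra hne
    obtain ⟨hχq, hn⟩ := (hθ q).mp hne
    have := neg_le_contactDegx (by rwa [(hagree q hqt).2]) hqt hn
    linarith
  · have hne : (D.phi - θ).coeff q ≠ 0 := by
      rw [(hagree q hqt).1, hθ, ← (hagree q hqt).2]
      exact ⟨hq, hn⟩
    by_contra! hlt
    exact hne (((epsilonOf_le_iff D θ).mp le_rfl).2 q (by linarith))

variable (D) in
theorem sum_epsilonOf_conjSer_eq_sum_contactDegx {ψ : DPS} (hψ : IsDPS ψ) {ζ : ℂ}
    (hζ : IsPrimitiveRoot ζ (polydromy ψ)) (hp : (Finset.range (polydromy ψ)).Nonempty)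
    {ε : ℚ} (hε : ε = (Finset.range (polydromy ψ)).inf' hp
      (fun j => epsilonOf D (conjSer (polydromy ψ) (ζ ^ (j + 1)) ψ))) :
    ∑ j ∈ Finset.range (polydromy ψ), epsilonOf D (conjSer (polydromy ψ) (ζ ^ (j + 1)) ψ) =
        ∑ n ∈ Finset.range (polydromy ψ), D.contactDegx ε n ∧
      ∀ q, D.phi.coeff q ≠ 0 → q < -ε → ((polydromy ψ : ℚ) * q).den = 1 := by
  set p := polydromy ψ
  have hp0 : 0 < p := Nat.pos_of_ne_zero (Finset.nonempty_range_iff.mp hp)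
  set G : ℕ → ℚ := fun n => epsilonOf D (conjSer p (ζ ^ n) ψ)
  have hG : Function.Periodic G p := fun n => by simp only [G, pow_add, hζ.pow_eq_one, mul_one]
  obtain ⟨j₀, -, hj₀⟩ := Finset.exists_mem_eq_inf' hp fun j => G (j + 1)
  set χ := conjSer p (ζ ^ (j₀ + 1)) ψ
  have hχε := (epsilonOf_le_iff D χ).mp (hε.trans hj₀).ge
  have hχ (n : ℕ) : conjSer p (ζ ^ n) χ = conjSer p (ζ ^ (n + (j₀ + 1))) ψ := by
    rw [conjSer_conjSer, ← pow_add]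
  have hbdd : BddDenom p χ := hψ.bddDenom_polydromy.conjSer _
  have hcontact (n : ℕ) : G (n + (j₀ + 1)) = D.contactDegx ε n := by
    simp only [G, ← hχ]
    refine D.epsilonOf_eq_contactDegx hχε.1 ?_ hχε.2
      (coeff_sub_conjSer_pow_ne_zero_iff hp0 hbdd hζ n)
    rw [hχ, hε]
    exact hG.inf'_range_succ_le hp _
  refine ⟨?_, fun q hq hqε => ?_⟩
  · calc ∑ j ∈ Finset.range p, G (j + 1) = ∑ n ∈ Finset.range p, G n := hG.sum_range_add 1
      _ = ∑ n ∈ Finset.range p, G (n + (j₀ + 1)) := (hG.sum_range_add _).symm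
      _ = ∑ n ∈ Finset.range p, D.contactDegx ε n := Finset.sum_congr rfl fun n _ => hcontact n
  · have hχq : χ.coeff q ≠ 0 := by rwa [← sub_eq_zero.mp (hχε.2 q hqε)]
    obtain ⟨k, rfl⟩ := hbdd q hχq
    rw [mul_div_cancel₀ _ (by positivity : (p : ℚ) ≠ 0), Rat.den_intCast]

end SemidegreeData

/-- Let `δ` be a semidegree with generic degree-wise Puiseux series
`φ(x) + ξ x^r`, let `ψ₁, ψ₂` be degree-wise Puiseux series and
`g_i = ∏_{ψ_{ij} conjugate of ψ_i} (y − ψ_{ij}(x))`.  Put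
`ε_{ij} = deg_x(φ + ξ x^r − ψ_{ij})` and `ε_i = min_j ε_{ij}`.  If `ε₁ ≥ ε₂` then
`δ(g₁)/deg_y(g₁) ≥ δ(g₂)/deg_y(g₂)`. -/
theorem semidegree_comparison (D : SemidegreeData) (ψ₁ ψ₂ : DPS)
    (h₁ : IsDPS ψ₁) (h₂ : IsDPS ψ₂)
    (hp₁ : (Finset.range (polydromy ψ₁)).Nonempty)
    (hp₂ : (Finset.range (polydromy ψ₂)).Nonempty)
    (ζ₁ ζ₂ : ℂ) (hζ₁ : IsPrimitiveRoot ζ₁ (polydromy ψ₁))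
    (hζ₂ : IsPrimitiveRoot ζ₂ (polydromy ψ₂))
    (g₁ g₂ : Polynomial DPS) (hg₁ : g₁ = allConjProd ζ₁ ψ₁) (hg₂ : g₂ = allConjProd ζ₂ ψ₂)
    (ε₁ ε₂ : ℚ)
    (hε₁ : ε₁ = (Finset.range (polydromy ψ₁)).inf' hp₁
      (fun j => epsilonOf D (conjSer (polydromy ψ₁) (ζ₁ ^ (j + 1)) ψ₁)))
    (hε₂ : ε₂ = (Finset.range (polydromy ψ₂)).inf' hp₂
      (fun j => epsilonOf D (conjSer (polydromy ψ₂) (ζ₂ ^ (j + 1)) ψ₂)))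
    (hle : ε₂ ≤ ε₁) :
    D.val g₂ / (g₂.natDegree : ℚ) ≤ D.val g₁ / (g₁.natDegree : ℚ) := by
  obtain ⟨hsum₁, hden₁⟩ := D.sum_epsilonOf_conjSer_eq_sum_contactDegx h₁ hζ₁ hp₁ hε₁
  obtain ⟨hsum₂, hden₂⟩ := D.sum_epsilonOf_conjSer_eq_sum_contactDegx h₂ hζ₂ hp₂ hε₂
  have hper₁ : Function.Periodic (D.contactDegx ε₁) (polydromy ψ₁) :=
    SemidegreeData.contactDegx_periodic hden₁
  have hper₂ : Function.Periodic (D.contactDegx ε₁) (polydromy ψ₂) :=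
    SemidegreeData.contactDegx_periodic fun q hq hqε => hden₂ q hq (hqε.trans_le (neg_le_neg hle))
  have hmono : ∑ n ∈ Finset.range (polydromy ψ₂), D.contactDegx ε₂ n ≤
      ∑ n ∈ Finset.range (polydromy ψ₂), D.contactDegx ε₁ n :=
    Finset.sum_le_sum fun n _ => SemidegreeData.contactDegx_mono n hle
  have hmean := hper₁.nsmul_sum_range_comm hper₂
  simp only [nsmul_eq_mul] at hmean
  have hpos₁ : (0 : ℚ) < polydromy ψ₁ := by
    exact_mod_cast Nat.pos_of_ne_zero (Finset.nonempty_range_iff.mp hp₁)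
  have hpos₂ : (0 : ℚ) < polydromy ψ₂ := by
    exact_mod_cast Nat.pos_of_ne_zero (Finset.nonempty_range_iff.mp hp₂)
  rw [hg₁, hg₂, D.val_allConjProd, D.val_allConjProd, natDegree_allConjProd,
    natDegree_allConjProd, hsum₁, hsum₂, div_le_div_iff₀ hpos₂ hpos₁]
  calc _ ≤ D.ptilde * (∑ n ∈ Finset.range (polydromy ψ₂), D.contactDegx ε₁ n) * polydromy ψ₁ := by
        gcongr
    _ = _ := by linear_combination -(D.ptilde : ℚ) * hmean

end
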